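/- arXiv:2303.04434 — 2 statements merged into one kernel-verified Lean document; each statement's English description precedes it below -/
import Mathlib

section
/- If α, β > 0 satisfy f_s(0,α) = 0 and f_d(0,α,β) = 0, then α = 1/√(1−a²) − 1/2 and β = 4 + √(1−2a²)·(1 − 4/√(1−a²)), and moreover f_s(u,α) ≤ 0 and f_d(u,α,β) ≤ 0 for all u ∈ [−1,1]. -/
noncomputable section

open Real Set

/-- A vector in Euclidean 3-space. -/
def v3 (x y z : ℝ) : EuclideanSpace ℝ (Fin 3) := !₂[x, y, z]

/-- Quadratic Bernstein polynomials (parametrized on `[-1,1]`). -/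
def bern (i : Fin 3) (u : ℝ) : ℝ :=
  (Nat.choose 2 (i : ℕ)) * ((1 + u) / 2) ^ (i : ℕ) * ((1 - u) / 2) ^ (2 - (i : ℕ))

/-- Control points `ctrl a α β i j = b i j` of the tensor product quadratic Bézier patch:
`b₀₀ = (-a,-a,√(1-2a²))`, `b₂₀ = (a,-a,√(1-2a²))`, `b₀₂ = (-a,a,√(1-2a²))`,
`b₂₂ = (a,a,√(1-2a²))`, `b₁₀ = α(b₀₀+b₂₀)`, `b₀₁ = α(b₀₀+b₀₂)`, `b₂₁ = α(b₂₀+b₂₂)`,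
`b₁₂ = α(b₀₂+b₂₂)`, `b₁₁ = β(0,0,1)`. The first index is the `u`-index. -/
def ctrl (a α β : ℝ) : Fin 3 → Fin 3 → EuclideanSpace ℝ (Fin 3) :=
  ![![v3 (-a) (-a) (Real.sqrt (1 - 2*a^2)),
     α • (v3 (-a) (-a) (Real.sqrt (1 - 2*a^2)) + v3 (-a) a (Real.sqrt (1 - 2*a^2))),
     v3 (-a) a (Real.sqrt (1 - 2*a^2))],
    ![α • (v3 (-a) (-a) (Real.sqrt (1 - 2*a^2)) + v3 a (-a) (Real.sqrt (1 - 2*a^2))),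
     β • v3 0 0 1,
     α • (v3 (-a) a (Real.sqrt (1 - 2*a^2)) + v3 a a (Real.sqrt (1 - 2*a^2)))],
    ![v3 a (-a) (Real.sqrt (1 - 2*a^2)),
     α • (v3 a (-a) (Real.sqrt (1 - 2*a^2)) + v3 a a (Real.sqrt (1 - 2*a^2))),
     v3 a a (Real.sqrt (1 - 2*a^2))]]

/-- The tensor product quadratic Bézier patch
`p(u,v) = ∑ᵢ ∑ⱼ Bᵢ²(u) Bⱼ²(v) bᵢⱼ`. -/
def bez (a α β u v : ℝ) : EuclideanSpace ℝ (Fin 3) :=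
  ∑ i : Fin 3, ∑ j : Fin 3, (bern i u * bern j v) • ctrl a α β i j

/-- The simplified radial error `f(u,v,α,β) = ‖p(u,v)‖² - 1`. -/
def f (a α β u v : ℝ) : ℝ := ‖bez a α β u v‖ ^ 2 - 1

/-- `f_s(u,α) = f(u,-1,α,β)`; this does not depend on `β` (the control point `b₁₁`
does not contribute on the side `v = -1`), so we take `β = 0`. -/
def fs (a α u : ℝ) : ℝ := f a α 0 u (-1)

/-- `f_d(u,α,β) = f(u,u,α,β)`, the error along the diagonal. -/
def fd (a α β u : ℝ) : ℝ := f a α β u u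

/-!
With `w(u) = (1 + u²)/2 + α(1 - u²)` and `c = √(1 - 2a²)`, the patch is
`p(u,v) = (a u w(v), a v w(u), c w(u) w(v) + (β/4 - cα²)(1 - u²)(1 - v²))`.
The two conditions at `u = 0` read `s(1/2 + α) = 1` and `c(1/4 + α) + β/4 = 1`, where
`s = √(1 - a²)`; they determine `α` and `β`. Then `s w(u) = 1 - t + st` with `t = u²`, and
`f_s = -(1 - s)² t (1 - t)` and `s² f_d = -2 t (1 - t) D(t)`, where the quadratic
`D = diagonalFactor s c` has nonnegative coefficients in the basis `(1 - t)², t(1 - t), t²`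
because `c² = 2s² - 1` and `1/√2 ≤ s ≤ 1`.
-/

/-- `B₀² + 2αB₁² + B₂²`, which recurs in every coordinate of the patch. -/
def edgeWeight (α u : ℝ) : ℝ := (1 + u^2)/2 + α*(1 - u^2)

def diagonalFactor (s c t : ℝ) : ℝ :=
  (s - c)^2 * (1 - t)^2 + (1 - 2*s + 2*s^3 - s^2*c) * t * (1 - t) + s^2 * (1 - s)^2 * t^2

lemma norm_v3_sq (x y z : ℝ) : ‖v3 x y z‖^2 = x^2 + y^2 + z^2 := by
  simp [EuclideanSpace.real_norm_sq_eq, Fin.sum_univ_three, v3, add_assoc]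

lemma bez_eq (a α β u v : ℝ) : bez a α β u v =
    v3 (a * u * edgeWeight α v) (a * v * edgeWeight α u)
      (√(1 - 2*a^2) * edgeWeight α u * edgeWeight α v
        + (β/4 - √(1 - 2*a^2) * α^2) * (1 - u^2) * (1 - v^2)) := by
  ext k
  fin_cases k <;>
  · simp only [bez, bern, ctrl, v3, edgeWeight, Fin.sum_univ_three, Fin.isValue, smul_add,
      Matrix.cons_val', Matrix.cons_val_fin_one, Matrix.cons_val_zero, Matrix.cons_val_one,
      Matrix.cons_val, Fin.zero_eta, Fin.mk_one, Fin.reduceFinMk, Fin.coe_ofNat_eq_mod,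
      Nat.zero_mod, Nat.one_mod, Nat.mod_succ, Nat.choose_zero_right, Nat.choose_succ_self_right,
      Nat.choose_self, Nat.reduceAdd, Nat.add_one_sub_one, tsub_zero, tsub_self, Nat.cast_one,
      Nat.cast_ofNat, pow_zero, pow_one, PiLp.add_apply, PiLp.smul_apply, smul_eq_mul]
    ring

lemma fs_eq {a : ℝ} (ha : 2*a^2 ≤ 1) (α u : ℝ) :
    fs a α u = a^2 * u^2 + (1 - a^2) * edgeWeight α u ^ 2 - 1 := by
  have hw : edgeWeight α (-1) = 1 := by norm_num [edgeWeight]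
  have hc := sq_sqrt (by linarith : (0:ℝ) ≤ 1 - 2*a^2)
  rw [fs, f, bez_eq, norm_v3_sq, hw]
  linear_combination edgeWeight α u ^ 2 * hc

lemma fd_eq (a α β u : ℝ) :
    fd a α β u = 2 * a^2 * u^2 * edgeWeight α u ^ 2
      + (√(1 - 2*a^2) * edgeWeight α u ^ 2 + (β/4 - √(1 - 2*a^2) * α^2) * (1 - u^2)^2)^2 - 1 := by
  rw [fd, f, bez_eq, norm_v3_sq]
  ring

lemma diagonalFactor_nonneg {s c t : ℝ} (hs0 : 0 ≤ s) (hs : 1/2 ≤ s^2) (hs1 : s ≤ 1)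
    (hc : c^2 = 2*s^2 - 1) (ht0 : 0 ≤ t) (ht1 : t ≤ 1) : 0 ≤ diagonalFactor s c t := by
  have hmid : s^2 * c ≤ 1 - 2*s + 2*s^3 := by
    refine le_of_sq_le_sq ?_ (by nlinarith)
    have key : (1 - 2*s + 2*s^3)^2 - (s^2 * c)^2
        = (1 - s)^2 * ((s^2 + s - 1)^2 + s^4 + 2*s^3) := by
      linear_combination -s^4 * hc
    have : 0 ≤ (1 - s)^2 * ((s^2 + s - 1)^2 + s^4 + 2*s^3) := by positivity
    linarith
  have := mul_nonneg (mul_nonneg (sub_nonneg.2 hmid) ht0) (sub_nonneg.2 ht1)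
  unfold diagonalFactor
  positivity

section

variable {a α β s : ℝ}

lemma sqrt_mul_eq_one_of_fs_zero (ha : 2*a^2 ≤ 1) (hα : 0 < α) (hs : fs a α 0 = 0) :
    √(1 - a^2) * (1/2 + α) = 1 := by
  rw [fs_eq ha] at hs
  refine (pow_eq_one_iff_of_nonneg (by positivity) two_ne_zero).1 ?_
  rw [mul_pow, sq_sqrt (by linarith)]
  simp only [edgeWeight] at hs
  linear_combination hs

lemma sqrt_mul_add_eq_one_of_fd_zero (hα : 0 ≤ α) (hβ : 0 < β) (hd : fd a α β 0 = 0) :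
    √(1 - 2*a^2) * (1/4 + α) + β/4 = 1 := by
  rw [fd_eq] at hd
  refine (pow_eq_one_iff_of_nonneg (by positivity) two_ne_zero).1 ?_
  simp only [edgeWeight] at hd
  linear_combination hd

lemma fs_eq_of_mul_eq_one (ha : 2*a^2 ≤ 1) (hs : s^2 = 1 - a^2) (hw : s * (1/2 + α) = 1)
    (u : ℝ) : fs a α u = -((1 - s)^2 * u^2 * (1 - u^2)) := by
  have hW : s * edgeWeight α u = 1 - u^2 + s * u^2 := by
    unfold edgeWeight
    linear_combination (1 - u^2) * hw
  rw [fs_eq ha]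
  linear_combination (s * edgeWeight α u + 1 - u^2 + s * u^2) * hW + (u^2 - edgeWeight α u ^ 2) * hs

lemma sq_mul_fd_eq_of_mul_eq_one (ha : 2*a^2 ≤ 1) (hs0 : s ≠ 0) (hs : s^2 = 1 - a^2)
    (hw : s * (1/2 + α) = 1) (hz : √(1 - 2*a^2) * (1/4 + α) + β/4 = 1) (u : ℝ) :
    s^2 * fd a α β u = -(2 * u^2 * (1 - u^2) * diagonalFactor s √(1 - 2*a^2) (u^2)) := by
  rw [fd_eq]
  set c := √(1 - 2*a^2)
  have hc : c^2 = 2*s^2 - 1 := by rw [sq_sqrt (by linarith), hs]; ring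
  set w := edgeWeight α u
  set t := u^2
  have hW : s * w = 1 - t + s * t := by
    unfold w edgeWeight
    linear_combination (1 - t) * hw
  have hZ : s * (c * w^2 + (β/4 - c * α^2) * (1 - t)^2)
      = s * (1 - t)^2 + 2 * c * t * (1 - t) + c * s * t^2 := by
    refine mul_left_cancel₀ hs0 ?_
    linear_combination c * (s * w + 1 - t + s * t) * hW + s^2 * (1 - t)^2 * hz
      - c * (1 - t)^2 * (1 + s * (1/2 + α)) * hw
  calc s^2 * (2 * a^2 * t * w^2 + (c * w^2 + (β/4 - c * α^2) * (1 - t)^2)^2 - 1)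
      = 2 * (1 - s^2) * t * (s * w)^2 + (s * (c * w^2 + (β/4 - c * α^2) * (1 - t)^2))^2
          - s^2 := by linear_combination 2 * t * s^2 * w^2 * hs
    _ = 2 * (1 - s^2) * t * (1 - t + s * t)^2
          + (s * (1 - t)^2 + 2 * c * t * (1 - t) + c * s * t^2)^2 - s^2 := by rw [hW, hZ]
    _ = -(2 * t * (1 - t) * diagonalFactor s c t) := by
      unfold diagonalFactor
      linear_combination ((2 * t * (1 - t) + s * t^2)^2 + 2 * t * (1 - t)^3) * hc

lemma fs_nonpos_of_mul_eq_one (ha : 2*a^2 ≤ 1) (hs : s^2 = 1 - a^2) (hw : s * (1/2 + α) = 1)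
    {u : ℝ} (hu : u ∈ Set.Icc (-1 : ℝ) 1) : fs a α u ≤ 0 := by
  have hu2 : 0 ≤ 1 - u^2 := by nlinarith [hu.1, hu.2]
  rw [fs_eq_of_mul_eq_one ha hs hw, neg_nonpos]
  positivity

lemma fd_nonpos_of_mul_eq_one (ha : 2*a^2 ≤ 1) (hs0 : 0 < s) (hs : s^2 = 1 - a^2)
    (hw : s * (1/2 + α) = 1) (hz : √(1 - 2*a^2) * (1/4 + α) + β/4 = 1)
    {u : ℝ} (hu : u ∈ Set.Icc (-1 : ℝ) 1) : fd a α β u ≤ 0 := by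
  have hu2 : u^2 ≤ 1 := by nlinarith [hu.1, hu.2]
  have hD : 0 ≤ diagonalFactor s √(1 - 2*a^2) (u^2) :=
    diagonalFactor_nonneg hs0.le (by linarith) (by nlinarith)
      (by rw [sq_sqrt (by linarith), hs]; ring) (sq_nonneg u) hu2
  have h1u : 0 ≤ 1 - u^2 := sub_nonneg.2 hu2
  refine nonpos_of_mul_nonpos_right ?_ (pow_pos hs0 2)
  rw [sq_mul_fd_eq_of_mul_eq_one ha hs0.ne' hs hw hz, neg_nonpos]
  positivity

end

/-- If `α, β > 0` satisfy `f_s(0,α) = 0` and `f_d(0,α,β) = 0`, then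
`α = 1/√(1-a²) - 1/2`, `β = 4 + √(1-2a²)(1 - 4/√(1-a²))`, and moreover
`f_s(u,α) ≤ 0` and `f_d(u,α,β) ≤ 0` for all `u ∈ [-1,1]`. -/
theorem atpointzero (a : ℝ) (ha : 0 < a) (ha' : a ≤ Real.sqrt 2 / 2)
    (α β : ℝ) (hα : 0 < α) (hβ : 0 < β)
    (hs : fs a α 0 = 0) (hd : fd a α β 0 = 0) :
    α = 1 / Real.sqrt (1 - a^2) - 1/2 ∧
    β = 4 + Real.sqrt (1 - 2*a^2) * (1 - 4 / Real.sqrt (1 - a^2)) ∧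
    ∀ u ∈ Set.Icc (-1:ℝ) 1, fs a α u ≤ 0 ∧ fd a α β u ≤ 0 := by
  have h2a : 2*a^2 ≤ 1 := by
    have := pow_le_pow_left₀ ha.le ha' 2
    rw [div_pow, sq_sqrt zero_le_two] at this
    linarith
  have hs0 : 0 < √(1 - a^2) := sqrt_pos.2 (by linarith)
  have hs2 : √(1 - a^2) ^ 2 = 1 - a^2 := sq_sqrt (by linarith)
  have hw := sqrt_mul_eq_one_of_fs_zero h2a hα hs
  have hz := sqrt_mul_add_eq_one_of_fd_zero hα.le hβ hd
  have hα_eq : α = 1 / √(1 - a^2) - 1/2 := by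
    field_simp
    linear_combination 2 * hw
  refine ⟨hα_eq, ?_, fun u hu => ⟨fs_nonpos_of_mul_eq_one h2a hs2 hw hu,
    fd_nonpos_of_mul_eq_one h2a hs0 hs2 hw hz hu⟩⟩
  calc β = 4 - √(1 - 2*a^2) - 4 * √(1 - 2*a^2) * α := by linear_combination 4 * hz
    _ = 4 + √(1 - 2*a^2) * (1 - 4 / √(1 - a^2)) := by rw [hα_eq]; ring

end
end

section
/- Let α ∈ [1/2, 3/2] and β > 0 satisfy f_d(0,α,β) > f_s(0,α) ≥ 0, and set μ = f_d(0,α,β). Let α' = (2√(1+μ)·√(1−a²) − 1 + a²)/(2(1−a²)) and β' = ((√(1−2a²) + 4√(1+μ))(1−a²) − 4√(1+μ)·√(1−2a²)·√(1−a²))/(1−a²), so that f_s(0,α') = μ and f_d(0,α',β') = μ. Then f_d(u,α,β) ≤ f_d(u,α',β') ≤ f_d(0,α,β) for all u ∈ [−1,1]. -/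
noncomputable section

open Real Set

/-!
Put `t = u²`, `s = √(1 - 2a²)`, `c = √(1 - a²)` and `M = √(1 + μ)`; then `f_d` is a polynomial
in `t`, `f_s(0, α) = (c (1/2 + α))² - 1` and `f_d(0, α, β) = (s/4 + α s + β/4)² - 1`. The new
parameters are characterised by `c (1/2 + α') = M = s/4 + α' s + β'/4`, so the hypotheses give
`α ≤ α'` and `β' = β - 4 s (α' - α)`; along this direction both coordinates of `p(u, u)` grow,
which is the first inequality. For the second, `c² (f_d(u, α', β') + 1)` is an explicit
polynomial whose gap to `c² M²` is `t (A (M - 1)² + B (M - 1) + C)` with `A, B, C ≥ 0` for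
`t ∈ [0, 1]` and `1/√2 ≤ c ≤ 1`.
-/

lemma norm_sq_eq_fin_three (x : EuclideanSpace ℝ (Fin 3)) :
    ‖x‖ ^ 2 = x 0 ^ 2 + x 1 ^ 2 + x 2 ^ 2 := by
  simp [EuclideanSpace.real_norm_sq_eq, Fin.sum_univ_three]

/-- `f_d(u, α, β)` as a polynomial in `t = u²`, with `s` standing for `√(1 - 2a²)`. -/
def diagonalError (a s α β t : ℝ) : ℝ :=
  2 * a ^ 2 * t * ((1 + t) / 2 + α * (1 - t)) ^ 2
    + (s * ((1 + t) ^ 2 / 4 + α * (1 - t ^ 2)) + β * (1 - t) ^ 2 / 4) ^ 2 - 1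

lemma fd_eq_diagonalError (a α β u : ℝ) :
    fd a α β u = diagonalError a √(1 - 2 * a ^ 2) α β (u ^ 2) := by
  simp only [fd, f, bez, norm_sq_eq_fin_three, diagonalError, Fin.sum_univ_three, ctrl, v3, bern,
    PiLp.add_apply, PiLp.smul_apply, smul_eq_mul, Matrix.cons_val_zero, Matrix.cons_val_one,
    Matrix.head_cons, Matrix.cons_val_two, Matrix.tail_cons]
  norm_num
  ring

lemma fs_zero {a : ℝ} (ha : 2 * a ^ 2 ≤ 1) (α : ℝ) :
    fs a α 0 = (√(1 - a ^ 2) * (1 / 2 + α)) ^ 2 - 1 := by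
  simp only [fs, f, bez, norm_sq_eq_fin_three, Fin.sum_univ_three, ctrl, v3, bern,
    PiLp.add_apply, PiLp.smul_apply, smul_eq_mul, Matrix.cons_val_zero, Matrix.cons_val_one,
    Matrix.head_cons, Matrix.cons_val_two, Matrix.tail_cons]
  norm_num
  linear_combination (1 / 2 + α) ^ 2 * (sq_sqrt (show 0 ≤ 1 - 2 * a ^ 2 by linarith)
    - sq_sqrt (show 0 ≤ 1 - a ^ 2 by nlinarith))

lemma diagonalError_zero (a s α β : ℝ) :
    diagonalError a s α β 0 = (s / 4 + α * s + β / 4) ^ 2 - 1 := by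
  rw [diagonalError]
  ring

/-- Trading `α` against `β` at the rate `Δβ = -4sΔα` keeps `f_d(0)` fixed and raises
`f_d` everywhere else. -/
lemma diagonalError_le_diagonalError {a s α β α' t : ℝ} (hs : 0 ≤ s) (hα : 0 ≤ α)
    (hαα' : α ≤ α') (hβ : 0 ≤ β) (ht₀ : 0 ≤ t) (ht₁ : t ≤ 1) :
    diagonalError a s α β t ≤ diagonalError a s α' (β - 4 * s * (α' - α)) t := by
  have hX₀ : 0 ≤ (1 + t) / 2 + α * (1 - t) := by nlinarith
  have hX : (1 + t) / 2 + α * (1 - t) ≤ (1 + t) / 2 + α' * (1 - t) := by nlinarith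
  have hZ₀ : 0 ≤ s * ((1 + t) ^ 2 / 4 + α * (1 - t ^ 2)) + β * (1 - t) ^ 2 / 4 := by
    have : 0 ≤ α * (1 - t ^ 2) := mul_nonneg hα (by nlinarith)
    positivity
  have hZ : s * ((1 + t) ^ 2 / 4 + α' * (1 - t ^ 2)) + (β - 4 * s * (α' - α)) * (1 - t) ^ 2 / 4
      = s * ((1 + t) ^ 2 / 4 + α * (1 - t ^ 2)) + β * (1 - t) ^ 2 / 4
        + 2 * s * (α' - α) * t * (1 - t) := by
    ring
  have hZ' : 0 ≤ 2 * s * (α' - α) * t * (1 - t) := by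
    have : 0 ≤ α' - α := by linarith
    have : 0 ≤ 1 - t := by linarith
    positivity
  rw [diagonalError, diagonalError, hZ]
  gcongr ?_ + ?_ - 1
  · exact mul_le_mul_of_nonneg_left (pow_le_pow_left₀ hX₀ hX 2) (by positivity)
  · exact pow_le_pow_left₀ hZ₀ (le_add_of_nonneg_right hZ') 2

lemma sq_mul_le_one_sub_two_mul_add_two_mul_cube {c s : ℝ} (hs : s ^ 2 = 2 * c ^ 2 - 1)
    (hs₀ : 0 ≤ s) (hsc : s ≤ c) (hc : c ≤ 1) : c ^ 2 * s ≤ 1 - 2 * c + 2 * c ^ 3 := by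
  have hc₀ : 0 ≤ c := hs₀.trans hsc
  have hpos : 0 ≤ 1 - 2 * c + 2 * c ^ 3 := by nlinarith [mul_nonneg hc₀ (sq_nonneg s)]
  have hid : (1 - 2 * c + 2 * c ^ 3 - c ^ 2 * s) * (1 - 2 * c + 2 * c ^ 3 + c ^ 2 * s)
      = (c - 1) ^ 2 * (1 + c * (c + 2) * s ^ 2) := by
    linear_combination (-2 * c + 3 * c ^ 2 - 2 * c ^ 4) * hs
  nlinarith [sq_nonneg (c - 1), mul_nonneg (mul_nonneg hc₀ (by linarith : (0 : ℝ) ≤ c + 2))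
    (sq_nonneg s), mul_nonneg (mul_nonneg (sq_nonneg c) hs₀) hpos]

lemma scaled_diagonal_norm_sq_le {c s M t : ℝ} (hs : s ^ 2 = 2 * c ^ 2 - 1) (hs₀ : 0 ≤ s)
    (hsc : s ≤ c) (hc : c ≤ 1) (hM : 1 ≤ M) (ht₀ : 0 ≤ t) (ht₁ : t ≤ 1) :
    2 * (1 - c ^ 2) * t * (c * t + M * (1 - t)) ^ 2
      + (c * s * t ^ 2 + 2 * M * s * t * (1 - t) + M * c * (1 - t) ^ 2) ^ 2 ≤ M ^ 2 * c ^ 2 := by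
  have hD : 0 ≤ 1 - 2 * c + 2 * c ^ 3 - c ^ 2 * s := by
    linarith [sq_mul_le_one_sub_two_mul_add_two_mul_cube hs hs₀ hsc hc]
  set D := 1 - 2 * c + 2 * c ^ 3 - c ^ 2 * s
  have h1t : 0 ≤ 1 - t := by linarith
  have h2c : 0 ≤ 2 - c := by linarith
  have hM1 : 0 ≤ M - 1 := by linarith
  have hgap : M ^ 2 * c ^ 2 - (2 * (1 - c ^ 2) * t * (c * t + M * (1 - t)) ^ 2
      + (c * s * t ^ 2 + 2 * M * s * t * (1 - t) + M * c * (1 - t) ^ 2) ^ 2)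
      = t * ((c ^ 2 * t ^ 3 + 4 * c ^ 2 * (1 - t) * t ^ 2 + 2 * (1 - t) ^ 2 * t
          + 2 * (c - s) ^ 2 * (1 - t) ^ 3) * (M - 1) ^ 2
        + (2 * c ^ 2 * t ^ 3 + 4 * c ^ 2 * (2 - c) * (1 - t) * t ^ 2
          + 2 * (1 + D) * (1 - t) ^ 2 * t + 4 * (c - s) ^ 2 * (1 - t) ^ 3) * (M - 1)
        + (2 * c ^ 2 * (1 - c) ^ 2 * (1 - t) * t ^ 2 + 2 * D * (1 - t) ^ 2 * t
          + 2 * (c - s) ^ 2 * (1 - t) ^ 3)) := by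
    linear_combination (-4 * t ^ 2 * M ^ 2 - 4 * t ^ 3 * M * c + 8 * t ^ 3 * M ^ 2 - t ^ 4 * c ^ 2
      + 4 * t ^ 4 * M * c - 4 * t ^ 4 * M ^ 2 - 2 * t * (1 - t) ^ 3 * M ^ 2) * hs
  rw [← sub_nonneg, hgap]
  positivity

lemma diagonalError_le_sq_sub_one {a c s M α β t : ℝ} (hc : c ^ 2 = 1 - a ^ 2)
    (hs : s ^ 2 = 1 - 2 * a ^ 2) (hs₀ : 0 ≤ s) (hsc : s ≤ c) (hc₀ : 0 < c) (hM : 1 ≤ M)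
    (hα : c * (1 / 2 + α) = M) (hβ : s / 4 + α * s + β / 4 = M) (ht₀ : 0 ≤ t) (ht₁ : t ≤ 1) :
    diagonalError a s α β t ≤ M ^ 2 - 1 := by
  have hX : c * ((1 + t) / 2 + α * (1 - t)) = c * t + M * (1 - t) := by
    linear_combination (1 - t) * hα
  have hZ : c * (s * ((1 + t) ^ 2 / 4 + α * (1 - t ^ 2)) + β * (1 - t) ^ 2 / 4)
      = c * s * t ^ 2 + 2 * M * s * t * (1 - t) + M * c * (1 - t) ^ 2 := by
    linear_combination c * (1 - t) ^ 2 * hβ + 2 * s * t * (1 - t) * hα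
  have hscaled : c ^ 2 * (diagonalError a s α β t + 1)
      = 2 * (1 - c ^ 2) * t * (c * t + M * (1 - t)) ^ 2
        + (c * s * t ^ 2 + 2 * M * s * t * (1 - t) + M * c * (1 - t) ^ 2) ^ 2 := by
    rw [diagonalError, ← hX, ← hZ]
    linear_combination 2 * t * c ^ 2 * ((1 + t) / 2 + α * (1 - t)) ^ 2 * hc
  have hpoly := scaled_diagonal_norm_sq_le (by linarith) hs₀ hsc (by nlinarith) hM ht₀ ht₁
  have : diagonalError a s α β t + 1 ≤ M ^ 2 :=
    le_of_mul_le_mul_left (by linarith) (pow_pos hc₀ 2)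
  linarith

/-- Let `α ∈ [1/2, 3/2]` and `β > 0` with `f_d(0,α,β) > f_s(0,α) ≥ 0`, and set
`μ = f_d(0,α,β)`. With `α' = (2√(1+μ)√(1-a²) - 1 + a²)/(2(1-a²))` and
`β' = ((√(1-2a²) + 4√(1+μ))(1-a²) - 4√(1+μ)√(1-2a²)√(1-a²))/(1-a²)`,
we have `f_d(u,α,β) ≤ f_d(u,α',β') ≤ f_d(0,α,β)` for all `u ∈ [-1,1]`. -/
theorem greatergraph (a : ℝ) (ha : 0 < a) (ha' : a ≤ Real.sqrt 2 / 2)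
    (α β : ℝ) (hα : α ∈ Set.Icc (1/2 : ℝ) (3/2)) (hβ : 0 < β)
    (hgt : fs a α 0 < fd a α β 0) (hpos : 0 ≤ fs a α 0)
    (μ α' β' : ℝ) (hμ : μ = fd a α β 0)
    (hα' : α' = (2*Real.sqrt (1 + μ)*Real.sqrt (1 - a^2) - 1 + a^2) / (2*(1 - a^2)))
    (hβ' : β' = ((Real.sqrt (1 - 2*a^2) + 4*Real.sqrt (1 + μ))*(1 - a^2)
        - 4*Real.sqrt (1 + μ)*Real.sqrt (1 - 2*a^2)*Real.sqrt (1 - a^2)) / (1 - a^2)) :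
    ∀ u ∈ Set.Icc (-1:ℝ) 1,
      fd a α β u ≤ fd a α' β' u ∧ fd a α' β' u ≤ fd a α β 0 := by
  have ha₂ : 2 * a ^ 2 ≤ 1 := by
    nlinarith [sq_sqrt (show (0 : ℝ) ≤ 2 by norm_num), sqrt_nonneg 2]
  rw [fs_zero ha₂] at hgt hpos
  set s := √(1 - 2 * a ^ 2)
  set c := √(1 - a ^ 2)
  have hs : s ^ 2 = 1 - 2 * a ^ 2 := sq_sqrt (by linarith)
  have hc : c ^ 2 = 1 - a ^ 2 := sq_sqrt (by linarith)
  have hs₀ : 0 ≤ s := sqrt_nonneg _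
  have hsc : s ≤ c := sqrt_le_sqrt (by nlinarith)
  have hc₀ : 0 < c := sqrt_pos.mpr (by linarith)
  set M := s / 4 + α * s + β / 4 with hM
  have hfd : fd a α β 0 = M ^ 2 - 1 := by
    rw [fd_eq_diagonalError, zero_pow two_ne_zero, diagonalError_zero]
  have hα₀ : 0 ≤ α := by linarith [hα.1]
  have hM₀ : 0 ≤ M := by have := mul_nonneg hα₀ hs₀; positivity
  have hsqrt : √(1 + μ) = M := by rw [hμ, hfd, add_sub_cancel, sqrt_sq hM₀]
  rw [hfd] at hgt
  have hfs : 1 ≤ c * (1 / 2 + α) :=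
    le_of_pow_le_pow_left₀ two_ne_zero (mul_nonneg hc₀.le (by linarith)) (by linarith)
  have hgap : c * (1 / 2 + α) < M := lt_of_pow_lt_pow_left₀ 2 hM₀ (by linarith)
  have hα'M : c * (1 / 2 + α') = M := by
    rw [hα', hsqrt, ← hc]
    field_simp
    linear_combination hc
  have hβ'M : s / 4 + α' * s + β' / 4 = M := by
    rw [hβ', hsqrt, ← hc]
    field_simp
    linear_combination 4 * s * hα'M
  have hαα' : α ≤ α' := by nlinarith
  have hβ'β : β' = β - 4 * s * (α' - α) := by linarith
  intro u ⟨hu₁, hu₂⟩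
  have hu : u ^ 2 ≤ 1 := by nlinarith
  rw [fd_eq_diagonalError, fd_eq_diagonalError, hfd]
  constructor
  · rw [hβ'β]
    exact diagonalError_le_diagonalError hs₀ hα₀ hαα' hβ.le (sq_nonneg u) hu
  · exact diagonalError_le_sq_sub_one hc hs hs₀ hsc hc₀ (by linarith) hα'M hβ'M (sq_nonneg u) hu
end
end
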